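/- Let H_k be symmetric positive definite with smallest eigenvalue λ_min(H_k), let s, y ∈ ℝ^d with sᵀy > 0, ρ, p > 0, b = 1/(sᵀy + ρ/p), and let H_{k+1} be the S-BFGS update. Then for every unit vector z: zᵀ H_{k+1} z ≥ λ_min(H_k)‖z - b y (sᵀz)‖² + (1/(sᵀy + ρ/p))(zᵀs)². In particular λ_min(H_{k+1}) > 0. -/

import Mathlib

/-!
With `w = z - b (sᵀz) y`, expanding the update gives
`zᵀ H₊ z = wᵀ H w + (a - b² yᵀHy) (sᵀz)²`. Writing `t = sᵀy + ρ/p` and `t' = sᵀy + ρ/(2p)`,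
the coefficient exceeds `1/t` by `(t + yᵀHy)(t - t') / (t² t') ≥ 0`. For positivity, `w` and
`sᵀz` vanish together only when `z = 0`.
-/

open Matrix

section QuadraticForm

variable {n R : Type*} [Fintype n] [CommRing R]

theorem Matrix.IsSymm.dotProduct_mulVec_comm {H : Matrix n n R} (hH : H.IsSymm) (u v : n → R) :
    u ⬝ᵥ (H *ᵥ v) = v ⬝ᵥ (H *ᵥ u) := by
  rw [dotProduct_mulVec, ← mulVec_transpose, hH.eq, dotProduct_comm]

/-- The S-BFGS update `(I - b s yᵀ) H (I - b y sᵀ) + (a - b² yᵀHy) s sᵀ`, expanded. -/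
def sbfgsUpdate (H : Matrix n n R) (a b : R) (s y : n → R) : Matrix n n R :=
  H + a • vecMulVec s s - b • (vecMulVec (H *ᵥ y) s + vecMulVec s (H *ᵥ y))

theorem dotProduct_sbfgsUpdate_mulVec {H : Matrix n n R} (hH : H.IsSymm) (a b : R)
    (s y z : n → R) :
    z ⬝ᵥ (sbfgsUpdate H a b s y *ᵥ z) =
      (z - (b * (s ⬝ᵥ z)) • y) ⬝ᵥ (H *ᵥ (z - (b * (s ⬝ᵥ z)) • y))
        + (a - b ^ 2 * (y ⬝ᵥ (H *ᵥ y))) * (s ⬝ᵥ z) ^ 2 := by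
  simp only [sbfgsUpdate, add_mulVec, sub_mulVec, smul_mulVec, vecMulVec_mulVec,
    MulOpposite.smul_eq_mul_unop, MulOpposite.unop_op,
    mulVec_sub, mulVec_smul, dotProduct_add, dotProduct_sub, dotProduct_smul,
    sub_dotProduct, smul_dotProduct, smul_eq_mul]
  rw [hH.dotProduct_mulVec_comm y z, dotProduct_comm s z, dotProduct_comm (H *ᵥ y) z,
    hH.dotProduct_mulVec_comm z y]
  ring

end QuadraticForm

theorem one_div_le_div_sub_sq_mul {t t' Q : ℝ} (ht' : 0 < t') (htt : t' ≤ t) (hQ : 0 ≤ Q) :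
    1 / t ≤ (1 + 1 / t * Q) / t' - (1 / t) ^ 2 * Q := by
  have ht : 0 < t := ht'.trans_le htt
  have hgap : (1 + 1 / t * Q) / t' - (1 / t) ^ 2 * Q - 1 / t
      = (t + Q) * (t - t') / (t ^ 2 * t') := by
    field_simp
    ring
  rw [← sub_nonneg, hgap]
  exact div_nonneg (mul_nonneg (by linarith) (sub_nonneg.mpr htt)) (by positivity)

theorem Matrix.PosDef.dotProduct_mulVec_add_mul_sq_pos {n : Type*} [Fintype n]
    {H : Matrix n n ℝ} (hH : H.PosDef) {c : ℝ} (hc : 0 < c) (β : ℝ) (s y : n → ℝ)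
    {z : n → ℝ} (hz : z ≠ 0) :
    0 < (z - (β * (s ⬝ᵥ z)) • y) ⬝ᵥ (H *ᵥ (z - (β * (s ⬝ᵥ z)) • y)) + c * (s ⬝ᵥ z) ^ 2 := by
  by_cases hsz : s ⬝ᵥ z = 0
  · simpa [hsz] using hH.dotProduct_mulVec_pos hz
  · exact add_pos_of_nonneg_of_pos (hH.posSemidef.dotProduct_mulVec_nonneg _) (by positivity)

/-- Lower eigenvalue bound for the S-BFGS update. -/
theorem sbfgs_lower_eigen_bound {d : ℕ} (s y : Fin d → ℝ) (hsy : 0 < s ⬝ᵥ y)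
    (Hk : Matrix (Fin d) (Fin d) ℝ) (hHk : Hk.PosDef)
    (lammin : ℝ) (hlam : ∀ v : Fin d → ℝ, lammin * (v ⬝ᵥ v) ≤ v ⬝ᵥ (Hk *ᵥ v))
    (p ρ : ℝ) (hp : 0 < p) (hρ : 0 < ρ)
    (b a : ℝ) (hb : b = 1 / (s ⬝ᵥ y + ρ / p))
    (ha : a = (1 + b * (y ⬝ᵥ (Hk *ᵥ y))) / (s ⬝ᵥ y + ρ / (2 * p)))
    (H1 : Matrix (Fin d) (Fin d) ℝ)
    (hH1 : H1 = Hk + a • vecMulVec s s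
        - b • (vecMulVec (Hk *ᵥ y) s + vecMulVec s (Hk *ᵥ y))) :
    (∀ z : Fin d → ℝ, z ⬝ᵥ z = 1 →
        lammin * ((z - (b * (s ⬝ᵥ z)) • y) ⬝ᵥ (z - (b * (s ⬝ᵥ z)) • y))
            + (1 / (s ⬝ᵥ y + ρ / p)) * (z ⬝ᵥ s) ^ 2
          ≤ z ⬝ᵥ (H1 *ᵥ z))
      ∧ ∀ z : Fin d → ℝ, z ≠ 0 → 0 < z ⬝ᵥ (H1 *ᵥ z) := by
  obtain rfl : H1 = sbfgsUpdate Hk a b s y := hH1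
  have hquad := dotProduct_sbfgsUpdate_mulVec (isHermitian_iff_isSymm.mp hHk.isHermitian) a b s y
  have hdenom : 0 < s ⬝ᵥ y + ρ / (2 * p) := by positivity
  have hdenom_le : s ⬝ᵥ y + ρ / (2 * p) ≤ s ⬝ᵥ y + ρ / p := by
    gcongr
    linarith
  have hcoeff : 1 / (s ⬝ᵥ y + ρ / p) ≤ a - b ^ 2 * (y ⬝ᵥ (Hk *ᵥ y)) := by
    rw [ha, hb]
    exact one_div_le_div_sub_sq_mul hdenom hdenom_le (hHk.posSemidef.dotProduct_mulVec_nonneg y)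
  refine ⟨fun z _ => ?_, fun z hz => ?_⟩
  · rw [hquad, dotProduct_comm z s]
    exact add_le_add (hlam _) (mul_le_mul_of_nonneg_right hcoeff (sq_nonneg _))
  · rw [hquad]
    have hcoeff_pos := (one_div_pos.mpr (hdenom.trans_le hdenom_le)).trans_le hcoeff
    exact hHk.dotProduct_mulVec_add_mul_sq_pos hcoeff_pos b s y hz
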